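/- Let Φ denote the cumulative distribution function and φ the probability density function of the standard Gaussian distribution N(0,1), and define G(x) := (x·φ(x)·Φ(x) + φ(x)²) / Φ(x)². Then G(x) → 1 as x → −∞ and G(x) → 0 as x → +∞. -/

import Mathlib

/-!
Write `u(x) = -x Φ(x) / φ(x)`, so that `G(x) = x² (1 - u) / u²`. Since `φ' = -x φ`, the function
`φ p - Φ` has derivative `φ (p' - x p - 1)`; as it vanishes at `-∞`, its sign on `x < 0` is that
of `p' - x p - 1`. Applied to the truncations `-1/x + 1/x³` and `-1/x + 1/x³ - 3/x⁵` of the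
asymptotic expansion of `Φ/φ`, this gives `1 - x⁻² ≤ u ≤ 1 - x⁻² + 3 x⁻⁴`. As `u ↦ (1 - u) / u²`
is decreasing on `(0, 2]`, `G` is squeezed between two rational functions of `1/x` tending to `1`.
At `+∞`, `Φ → 1` while `φ` and `x φ` tend to `0`.
-/

/-- CDF of the standard Gaussian distribution `N(0,1)`. -/
noncomputable def gaussCDF (x : ℝ) : ℝ :=
  ((ProbabilityTheory.gaussianReal 0 1) (Set.Iic x)).toReal

/-- PDF of the standard Gaussian distribution `N(0,1)`. -/
noncomputable def gaussPDF (x : ℝ) : ℝ := ProbabilityTheory.gaussianPDFReal 0 1 x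

/-- `G(x) = (x φ(x) Φ(x) + φ(x)²) / Φ(x)²`. -/
noncomputable def G (x : ℝ) : ℝ :=
  (x * gaussPDF x * gaussCDF x + (gaussPDF x) ^ 2) / (gaussCDF x) ^ 2

open Filter Topology Set Real ProbabilityTheory MeasureTheory

lemma gaussPDF_eq (x : ℝ) : gaussPDF x = (√(2 * π))⁻¹ * rexp (-x ^ 2 / 2) := by
  simp [gaussPDF, gaussianPDFReal]

lemma gaussPDF_pos (x : ℝ) : 0 < gaussPDF x :=
  gaussianPDFReal_pos 0 1 x one_ne_zero

lemma hasDerivAt_gaussPDF (x : ℝ) : HasDerivAt gaussPDF (-x * gaussPDF x) x := by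
  rw [gaussPDF_eq, funext gaussPDF_eq]
  have hexp : HasDerivAt (fun y : ℝ => -y ^ 2 / 2) (-x) x :=
    ((hasDerivAt_pow 2 x).fun_neg.div_const 2).congr_deriv (by ring)
  exact (hexp.exp.const_mul (√(2 * π))⁻¹).congr_deriv (by ring)

lemma tendsto_pow_mul_gaussPDF_cocompact (n : ℕ) :
    Tendsto (fun x => x ^ n * gaussPDF x) (cocompact ℝ) (𝓝 0) := by
  have h := (tendsto_rpow_abs_mul_exp_neg_mul_sq_cocompact (one_half_pos (α := ℝ)) n).const_mul
    (√(2 * π))⁻¹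
  rw [mul_zero] at h
  refine squeeze_zero_norm (fun x => le_of_eq ?_) h
  rw [norm_mul, norm_pow, Real.norm_eq_abs, Real.norm_eq_abs, gaussPDF_eq, rpow_natCast,
    abs_of_pos (mul_pos (inv_pos.2 (sqrt_pos.2 (by positivity))) (exp_pos _))]
  ring_nf

lemma tendsto_gaussPDF_mul_atBot {p : ℝ → ℝ} {b : ℝ} (hp : Tendsto p atBot (𝓝 b)) :
    Tendsto (fun x => gaussPDF x * p x) atBot (𝓝 0) := by
  have hφ := (tendsto_pow_mul_gaussPDF_cocompact 0).mono_left atBot_le_cocompact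
  simpa using hφ.mul hp

lemma gaussCDF_eq_cdf : gaussCDF = cdf (gaussianReal 0 1) := by
  ext x
  rw [cdf_eq_real, measureReal_def, gaussCDF]

lemma tendsto_gaussCDF_atBot : Tendsto gaussCDF atBot (𝓝 0) :=
  gaussCDF_eq_cdf ▸ tendsto_cdf_atBot _

lemma gaussCDF_pos (x : ℝ) : 0 < gaussCDF x := by
  rw [gaussCDF, ENNReal.toReal_pos_iff]
  refine ⟨pos_iff_ne_zero.2 fun h => ?_, measure_lt_top _ _⟩
  simpa using gaussianReal_absolutelyContinuous' 0 one_ne_zero h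

lemma hasDerivAt_gaussCDF (x : ℝ) : HasDerivAt gaussCDF (gaussPDF x) x := by
  have hφ : Integrable gaussPDF := integrable_gaussianPDFReal 0 1
  have hcont : Continuous gaussPDF := by rw [funext gaussPDF_eq]; fun_prop
  have hΦ : ∀ y, gaussCDF y = gaussCDF 0 + ∫ t in (0 : ℝ)..y, gaussPDF t := fun y => by
    have hint : ∀ z, gaussCDF z = ∫ t in Iic z, gaussPDF t := fun z => by
      rw [gaussCDF, gaussianReal_apply_eq_integral 0 one_ne_zero, ENNReal.toReal_ofReal
        (setIntegral_nonneg measurableSet_Iic fun t _ => gaussianPDFReal_nonneg 0 1 t)]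
      rfl
    rw [hint, hint, ← intervalIntegral.integral_Iic_sub_Iic hφ.integrableOn hφ.integrableOn]
    ring
  rw [funext hΦ]
  exact (intervalIntegral.integral_hasDerivAt_right hφ.intervalIntegrable
    (hcont.stronglyMeasurableAtFilter _ _) hcont.continuousAt).const_add _

lemma MonotoneOn.le_of_tendsto {α β : Type*} [LinearOrder α] [NoMinOrder α]
    [TopologicalSpace β] [Preorder β] [OrderClosedTopology β] {f : α → β} {a : α} {l : β}
    (hf : MonotoneOn f (Iio a)) (hl : Tendsto f atBot (𝓝 l)) {x : α} (hx : x < a) : l ≤ f x :=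
  haveI : Nonempty α := ⟨x⟩
  _root_.le_of_tendsto hl <| by
    filter_upwards [eventually_le_atBot x, eventually_lt_atBot a] with y hyx hya
    exact hf hya hx hyx

lemma AntitoneOn.ge_of_tendsto {α β : Type*} [LinearOrder α] [NoMinOrder α]
    [TopologicalSpace β] [Preorder β] [OrderClosedTopology β] {f : α → β} {a : α} {l : β}
    (hf : AntitoneOn f (Iio a)) (hl : Tendsto f atBot (𝓝 l)) {x : α} (hx : x < a) : f x ≤ l :=
  haveI : Nonempty α := ⟨x⟩
  _root_.ge_of_tendsto hl <| by
    filter_upwards [eventually_le_atBot x, eventually_lt_atBot a] with y hyx hya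
    exact hf hya hx hyx

section MillsBounds

variable {p p' : ℝ → ℝ} {a : ℝ}

lemma hasDerivAt_gaussPDF_mul_sub_gaussCDF {x : ℝ} (hp : HasDerivAt p (p' x) x) :
    HasDerivAt (fun y => gaussPDF y * p y - gaussCDF y)
      (gaussPDF x * (p' x - (1 + x * p x))) x :=
  (((hasDerivAt_gaussPDF x).mul hp).sub (hasDerivAt_gaussCDF x)).congr_deriv (by ring)

lemma gaussCDF_le_gaussPDF_mul (hp : ∀ x < a, HasDerivAt p (p' x) x)
    (hp' : ∀ x < a, 1 + x * p x ≤ p' x) (hlim : Tendsto (fun x => gaussPDF x * p x) atBot (𝓝 0))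
    {x : ℝ} (hx : x < a) : gaussCDF x ≤ gaussPDF x * p x := by
  have hmono : MonotoneOn (fun y => gaussPDF y * p y - gaussCDF y) (Iio a) := by
    refine monotoneOn_of_hasDerivWithinAt_nonneg (convex_Iio a)
      (f' := fun y => gaussPDF y * (p' y - (1 + y * p y)))
      (fun y hy => (hasDerivAt_gaussPDF_mul_sub_gaussCDF (hp y hy)).continuousAt.continuousWithinAt)
      (fun y hy => ?_) (fun y hy => ?_) <;> rw [interior_Iio] at hy
    · exact (hasDerivAt_gaussPDF_mul_sub_gaussCDF (hp y hy)).hasDerivWithinAt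
    · exact mul_nonneg (gaussPDF_pos y).le (sub_nonneg.2 (hp' y hy))
  exact sub_nonneg.1 (hmono.le_of_tendsto (by simpa using hlim.sub tendsto_gaussCDF_atBot) hx)

lemma gaussPDF_mul_le_gaussCDF (hp : ∀ x < a, HasDerivAt p (p' x) x)
    (hp' : ∀ x < a, p' x ≤ 1 + x * p x) (hlim : Tendsto (fun x => gaussPDF x * p x) atBot (𝓝 0))
    {x : ℝ} (hx : x < a) : gaussPDF x * p x ≤ gaussCDF x := by
  have hanti : AntitoneOn (fun y => gaussPDF y * p y - gaussCDF y) (Iio a) := by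
    refine antitoneOn_of_hasDerivWithinAt_nonpos (convex_Iio a)
      (f' := fun y => gaussPDF y * (p' y - (1 + y * p y)))
      (fun y hy => (hasDerivAt_gaussPDF_mul_sub_gaussCDF (hp y hy)).continuousAt.continuousWithinAt)
      (fun y hy => ?_) (fun y hy => ?_) <;> rw [interior_Iio] at hy
    · exact (hasDerivAt_gaussPDF_mul_sub_gaussCDF (hp y hy)).hasDerivWithinAt
    · exact mul_nonpos_of_nonneg_of_nonpos (gaussPDF_pos y).le (sub_nonpos.2 (hp' y hy))
  exact sub_nonpos.1 (hanti.ge_of_tendsto (by simpa using hlim.sub tendsto_gaussCDF_atBot) hx)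

end MillsBounds

lemma gaussPDF_mul_le_gaussCDF_of_neg {x : ℝ} (hx : x < 0) :
    gaussPDF x * (-x⁻¹ + x⁻¹ ^ 3) ≤ gaussCDF x := by
  refine gaussPDF_mul_le_gaussCDF (p' := fun y => y⁻¹ ^ 2 - 3 * y⁻¹ ^ 4) (fun y hy => ?_)
    (fun y hy => ?_) (tendsto_gaussPDF_mul_atBot
      (tendsto_inv_atBot_zero.neg.add (tendsto_inv_atBot_zero.pow 3))) hx
  · refine ((hasDerivAt_inv hy.ne).neg.add ((hasDerivAt_inv hy.ne).pow 3)).congr_deriv ?_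
    have hy0 := hy.ne
    simp only [inv_pow]
    field_simp
    ring
  · rw [show 1 + y * (-y⁻¹ + y⁻¹ ^ 3) = y⁻¹ ^ 2 by field_simp [hy.ne]; ring]
    exact sub_le_self _ (by positivity)

lemma gaussCDF_le_gaussPDF_mul_of_neg {x : ℝ} (hx : x < 0) :
    gaussCDF x ≤ gaussPDF x * (-x⁻¹ + x⁻¹ ^ 3 - 3 * x⁻¹ ^ 5) := by
  refine gaussCDF_le_gaussPDF_mul (p' := fun y => y⁻¹ ^ 2 - 3 * y⁻¹ ^ 4 + 15 * y⁻¹ ^ 6)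
    (fun y hy => ?_) (fun y hy => ?_) (tendsto_gaussPDF_mul_atBot
      ((tendsto_inv_atBot_zero.neg.add (tendsto_inv_atBot_zero.pow 3)).sub
        ((tendsto_inv_atBot_zero.pow 5).const_mul 3))) hx
  · refine ((hasDerivAt_inv hy.ne).neg.add ((hasDerivAt_inv hy.ne).pow 3) |>.sub
      (((hasDerivAt_inv hy.ne).pow 5).const_mul 3)).congr_deriv ?_
    have hy0 := hy.ne
    simp only [inv_pow]
    field_simp
    ring
  · rw [show 1 + y * (-y⁻¹ + y⁻¹ ^ 3 - 3 * y⁻¹ ^ 5) = y⁻¹ ^ 2 - 3 * y⁻¹ ^ 4 by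
      field_simp [hy.ne]; ring]
    exact le_add_of_nonneg_right (by positivity)

lemma antitoneOn_one_sub_div_sq : AntitoneOn (fun u : ℝ => (1 - u) / u ^ 2) (Ioc 0 2) := by
  rintro u ⟨hu, -⟩ v ⟨hv, hv2⟩ huv
  rw [div_le_div_iff₀ (by positivity) (by positivity)]
  have hsum : 0 ≤ u * (2 - v) + (v - u) := by nlinarith
  nlinarith [mul_nonneg (sub_nonneg.2 huv) hsum]

lemma G_eq_of_ne_zero {x u : ℝ} (hx : x ≠ 0) (hu : u = -x * (gaussCDF x / gaussPDF x)) :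
    G x = x ^ 2 * ((1 - u) / u ^ 2) := by
  have := gaussPDF_pos x
  have := gaussCDF_pos x
  rw [G, hu]
  field_simp
  ring

lemma G_mem_Icc {x : ℝ} (hx : x ≤ -2) :
    G x ∈ Icc ((1 - 3 * x⁻¹ ^ 2) / (1 - x⁻¹ ^ 2 + 3 * x⁻¹ ^ 4) ^ 2) (1 / (1 - x⁻¹ ^ 2) ^ 2) := by
  have hx0 : x < 0 := by linarith
  have hxne := hx0.ne
  have hs : x⁻¹ ^ 2 ≤ 4⁻¹ := by
    rw [inv_pow]
    exact inv_anti₀ (by norm_num) (by nlinarith)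
  have hφ := gaussPDF_pos x
  set u := -x * (gaussCDF x / gaussPDF x) with hu
  rw [G_eq_of_ne_zero hxne hu]
  have hlow : 1 - x⁻¹ ^ 2 ≤ u := calc
    1 - x⁻¹ ^ 2 = -x * (-x⁻¹ + x⁻¹ ^ 3) := by field_simp; ring
    _ ≤ u := mul_le_mul_of_nonneg_left
      ((le_div_iff₀' hφ).2 (gaussPDF_mul_le_gaussCDF_of_neg hx0)) (neg_nonneg.2 hx0.le)
  have hupp : u ≤ 1 - x⁻¹ ^ 2 + 3 * x⁻¹ ^ 4 := calc
    u ≤ -x * (-x⁻¹ + x⁻¹ ^ 3 - 3 * x⁻¹ ^ 5) := mul_le_mul_of_nonneg_left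
      ((div_le_iff₀' hφ).2 (gaussCDF_le_gaussPDF_mul_of_neg hx0)) (neg_nonneg.2 hx0.le)
    _ = 1 - x⁻¹ ^ 2 + 3 * x⁻¹ ^ 4 := by field_simp; ring
  have hp : 0 < 1 - x⁻¹ ^ 2 := by linarith
  have hq : 1 - x⁻¹ ^ 2 + 3 * x⁻¹ ^ 4 ≤ 2 := by nlinarith [sq_nonneg (x⁻¹ ^ 2)]
  constructor
  · calc (1 - 3 * x⁻¹ ^ 2) / (1 - x⁻¹ ^ 2 + 3 * x⁻¹ ^ 4) ^ 2
        = x ^ 2 * ((1 - (1 - x⁻¹ ^ 2 + 3 * x⁻¹ ^ 4)) / (1 - x⁻¹ ^ 2 + 3 * x⁻¹ ^ 4) ^ 2) := by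
          field_simp
          ring
      _ ≤ x ^ 2 * ((1 - u) / u ^ 2) := mul_le_mul_of_nonneg_left
          (antitoneOn_one_sub_div_sq ⟨hp.trans_le hlow, hupp.trans hq⟩
            ⟨hp.trans_le (hlow.trans hupp), hq⟩ hupp) (sq_nonneg x)
  · calc x ^ 2 * ((1 - u) / u ^ 2)
        ≤ x ^ 2 * ((1 - (1 - x⁻¹ ^ 2)) / (1 - x⁻¹ ^ 2) ^ 2) := mul_le_mul_of_nonneg_left
          (antitoneOn_one_sub_div_sq ⟨hp, by linarith⟩ ⟨hp.trans_le hlow, hupp.trans hq⟩ hlow)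
          (sq_nonneg x)
      _ = 1 / (1 - x⁻¹ ^ 2) ^ 2 := by
          field_simp
          ring

lemma tendsto_G_atBot : Tendsto G atBot (𝓝 1) := by
  have hlow : Tendsto (fun s : ℝ => (1 - 3 * s ^ 2) / (1 - s ^ 2 + 3 * s ^ 4) ^ 2) (𝓝 0) (𝓝 1) := by
    convert (show ContinuousAt (fun s : ℝ => (1 - 3 * s ^ 2) / (1 - s ^ 2 + 3 * s ^ 4) ^ 2) 0 by
      fun_prop (disch := norm_num)).tendsto
    norm_num
  have hupp : Tendsto (fun s : ℝ => 1 / (1 - s ^ 2) ^ 2) (𝓝 0) (𝓝 1) := by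
    convert (show ContinuousAt (fun s : ℝ => 1 / (1 - s ^ 2) ^ 2) 0 by
      fun_prop (disch := norm_num)).tendsto
    norm_num
  refine tendsto_of_tendsto_of_tendsto_of_le_of_le' (hlow.comp tendsto_inv_atBot_zero)
    (hupp.comp tendsto_inv_atBot_zero) ?_ ?_ <;>
  filter_upwards [eventually_le_atBot (-2)] with x hx
  exacts [(G_mem_Icc hx).1, (G_mem_Icc hx).2]

lemma tendsto_G_atTop : Tendsto G atTop (𝓝 0) := by
  have hΦ : Tendsto gaussCDF atTop (𝓝 1) := gaussCDF_eq_cdf ▸ tendsto_cdf_atTop _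
  have hφ := (tendsto_pow_mul_gaussPDF_cocompact 0).mono_left atTop_le_cocompact
  have hxφ := (tendsto_pow_mul_gaussPDF_cocompact 1).mono_left atTop_le_cocompact
  simp only [pow_zero, one_mul, pow_one] at hφ hxφ
  unfold G
  simpa [Pi.div_def] using ((hxφ.mul hΦ).add (hφ.pow 2)).div (hΦ.pow 2) (by norm_num)

/-- Limits of `G` at `−∞` and `+∞` (inside the proof of Lemma 3): `G(x) → 1` as `x → −∞`
and `G(x) → 0` as `x → +∞`. -/
theorem stmt7 :
    Filter.Tendsto G Filter.atBot (nhds 1) ∧ Filter.Tendsto G Filter.atTop (nhds 0) :=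
  ⟨tendsto_G_atBot, tendsto_G_atTop⟩
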